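/- For quantum FedAvg, under β-smoothness, bounded gradient dissimilarity with constants G and B, unbiased classical stochastic gradients with variance σ², and the biased quantum gradient oracle with bias bound U_q and variance σ_q², if η_ℓ ≤ c₀/((1+B²)βKη_g) and η_g ≥ 1 for a sufficiently small absolute constant c₀ > 0, then there exists an absolute constant C > 0 such that the average local-drift energy satisfies E_r ≤ C η_ℓ² K² ( B²‖∇f(x^{r−1})‖² + G² + U_q² + σ² + σ_q² ). -/

import Mathlib

open MeasureTheory
open scoped BigOperators RealInnerProductSpace

/-- The global objective `f(x) = (1/N) Σ_i f_i(x)`. -/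
noncomputable def globalObj {d N : ℕ} (f : Fin N → EuclideanSpace ℝ (Fin d) → ℝ) :
    EuclideanSpace ℝ (Fin d) → ℝ :=
  fun x => (1 / (N : ℝ)) * ∑ i, f i x

/-!
Each quantum gradient splits as oracle noise + classical noise + (∇fᵢ(y) - ∇fᵢ(x)) + bias +
∇fᵢ(x), so conditionally on the start of the round its second moment is at most
`5 (σ_q² + σ² + U_q² + ‖∇fᵢ(x)‖²) + 5 β² Dᵢₖ`, where `Dᵢₖ` is the drift of the current iterate;
by Cauchy–Schwarz, `Dᵢₖ` is at most `η_ℓ² k` times the sum of the previous second moments.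
Under `η_ℓ β K ≤ 1/4` this recursion closes at `Dᵢₖ ≤ 10 η_ℓ² K² (σ_q² + σ² + U_q² + ‖∇fᵢ(x)‖²)`,
and averaging over the clients with the dissimilarity bound gives the claim with `c₀ = 1/2`,
`C = 10`.
-/

open scoped NNReal
open Finset Filter

lemma norm_sum_sq_le_card_mul {ι E : Type*} [SeminormedAddCommGroup E] (s : Finset ι)
    (v : ι → E) : ‖∑ j ∈ s, v j‖ ^ 2 ≤ #s * ∑ j ∈ s, ‖v j‖ ^ 2 :=
  (pow_le_pow_left₀ (norm_nonneg _) (norm_sum_le s v) 2).trans sq_sum_le_card_mul_sum_sq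

lemma norm_iterate_sub_sq_le {E : Type*} [SeminormedAddCommGroup E] [NormedSpace ℝ E]
    {K : ℕ} {η : ℝ} {x : E} {y v : ℕ → E} (h0 : y 0 = x)
    (hstep : ∀ k < K, y (k + 1) = y k - η • v k) :
    ∀ k ≤ K, ‖y k - x‖ ^ 2 ≤ η ^ 2 * k * ∑ j ∈ range k, ‖v j‖ ^ 2 := by
  have hy : ∀ k ≤ K, y k = x - η • ∑ j ∈ range k, v j := by
    intro k hk
    induction k with
    | zero => simp [h0]
    | succ k ih =>
      rw [hstep k hk, ih (by omega), sum_range_succ, smul_add]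
      abel
  intro k hk
  calc ‖y k - x‖ ^ 2 = η ^ 2 * ‖∑ j ∈ range k, v j‖ ^ 2 := by
        rw [hy k hk, sub_sub_cancel_left, norm_neg, norm_smul, mul_pow, Real.norm_eq_abs, sq_abs]
    _ ≤ η ^ 2 * (k * ∑ j ∈ range k, ‖v j‖ ^ 2) := by
        gcongr
        simpa using norm_sum_sq_le_card_mul (range k) v
    _ = η ^ 2 * k * ∑ j ∈ range k, ‖v j‖ ^ 2 := by ring

lemma le_of_drift_recursion {K : ℕ} {S T : ℕ → ℝ} {M L η : ℝ} (hM : 0 ≤ M) (hL : 0 ≤ L)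
    (hηLK : η ^ 2 * L * K ^ 2 ≤ 1 / 2)
    (hS : ∀ k ≤ K, S k ≤ η ^ 2 * k * ∑ j ∈ range k, T j)
    (hT : ∀ k < K, T k ≤ M + L * S k) :
    ∀ k ≤ K, S k ≤ 2 * η ^ 2 * K ^ 2 * M := by
  intro k
  induction k using Nat.strong_induction_on with
  | _ k ih =>
    intro hk
    have hkK : (k : ℝ) ≤ K := by exact_mod_cast hk
    have hT' : ∀ j ∈ range k, T j ≤ 2 * M := fun j hj => by
      have hj := mem_range.1 hj
      calc T j ≤ M + L * (2 * η ^ 2 * K ^ 2 * M) :=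
            (hT j (by omega)).trans (by gcongr; exact ih j hj (by omega))
        _ ≤ 2 * M := by nlinarith
    calc S k ≤ η ^ 2 * k * ∑ j ∈ range k, T j := hS k hk
      _ ≤ η ^ 2 * k * (k * (2 * M)) := by
          gcongr
          simpa using sum_le_sum hT'
      _ ≤ 2 * η ^ 2 * K ^ 2 * M := by
          have : (k : ℝ) * k ≤ K ^ 2 := by nlinarith [k.cast_nonneg (α := ℝ)]
          nlinarith [mul_le_mul_of_nonneg_left this (by positivity : (0 : ℝ) ≤ 2 * η ^ 2 * M)]

lemma double_avg_le_of_le {N K : ℕ} (hN : 0 < N) (hK : 0 < K) {s : Fin N → ℕ → ℝ}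
    {a : Fin N → ℝ} {c V A : ℝ} (hc : 0 ≤ c) (hs : ∀ i, ∀ k < K, s i k ≤ c * (V + a i))
    (ha : (1 / (N : ℝ)) * ∑ i, a i ≤ A) :
    (1 / ((K : ℝ) * N)) * ∑ i, ∑ k ∈ range K, s i k ≤ c * (V + A) := by
  have hNR : (0 : ℝ) < N := by exact_mod_cast hN
  have hKR : (0 : ℝ) < K := by exact_mod_cast hK
  have hsum : ∑ i, ∑ k ∈ range K, s i k ≤ ∑ i : Fin N, K * (c * (V + a i)) :=
    sum_le_sum fun i _ => by
      simpa using sum_le_sum fun k hk => hs i k (mem_range.1 hk)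
  have hsplit : ∑ i : Fin N, K * (c * (V + a i)) = K * c * (N * V + ∑ i, a i) := by
    simp only [mul_add, sum_add_distrib, sum_const, card_univ, Fintype.card_fin, nsmul_eq_mul,
      ← mul_sum]
    ring
  have hA : ∑ i, a i ≤ N * A := by rwa [one_div, inv_mul_le_iff₀ hNR] at ha
  rw [div_mul_eq_mul_div, one_mul, div_le_iff₀ (by positivity)]
  calc ∑ i, ∑ k ∈ range K, s i k ≤ K * c * (N * V + ∑ i, a i) := hsum.trans_eq hsplit
    _ ≤ K * c * (N * V + N * A) := by gcongr
    _ = c * (V + A) * (K * N) := by ring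

lemma norm_sq_le_of_biased_oracle {E : Type*} [SeminormedAddCommGroup E] {F b : E → E}
    {L : ℝ≥0} {U : ℝ} (hF : LipschitzWith L F) (hb : ∀ z, ‖b z‖ ≤ U) (q g y x : E) :
    ‖q‖ ^ 2 ≤ 5 * ‖q - (g + b y)‖ ^ 2 + 5 * ‖g - F y‖ ^ 2 + 5 * L ^ 2 * ‖y - x‖ ^ 2
      + 5 * (U ^ 2 + ‖F x‖ ^ 2) := by
  have hsplit : q = ∑ j, ![q - (g + b y), g - F y, F y - F x, b y, F x] j := by
    simp only [Fin.sum_univ_five, Matrix.cons_val_zero, Matrix.cons_val_one, Matrix.cons_val]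
    abel
  have hFyx : ‖F y - F x‖ ^ 2 ≤ L ^ 2 * ‖y - x‖ ^ 2 := by
    rw [← mul_pow]; gcongr; exact hF.norm_sub_le y x
  have hby : ‖b y‖ ^ 2 ≤ U ^ 2 := by gcongr; exact hb y
  have h5 := norm_sum_sq_le_card_mul univ ![q - (g + b y), g - F y, F y - F x, b y, F x]
  rw [← hsplit] at h5
  simp only [Nat.succ_eq_add_one, Nat.reduceAdd, card_univ, Fintype.card_fin, Nat.cast_ofNat,
    Fin.sum_univ_five, Matrix.cons_val_zero, Matrix.cons_val_one, Matrix.cons_val] at h5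
  linarith

section CondExp

variable {Ω : Type*} {m m₀ : MeasurableSpace Ω} {μ : Measure Ω}

lemma condExp_le_sum_mul_condExp {ι : Type*} {s : Finset ι} {X : Ω → ℝ} {F : ι → Ω → ℝ}
    (c : ι → ℝ) (hX : Integrable X μ) (hF : ∀ j ∈ s, Integrable (F j) μ)
    (hle : ∀ ω, X ω ≤ ∑ j ∈ s, c j * F j ω) :
    μ[X|m] ≤ᵐ[μ] fun ω => ∑ j ∈ s, c j * μ[F j|m] ω := by
  have hcF : ∀ j ∈ s, Integrable (c j • F j) μ := fun j hj => (hF j hj).smul (c j)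
  have hmono : μ[X|m] ≤ᵐ[μ] μ[∑ j ∈ s, c j • F j|m] :=
    condExp_mono hX (integrable_finsetSum' s hcF) <| Eventually.of_forall fun ω => by
      simpa [Finset.sum_apply] using hle ω
  have hsmul : ∀ᵐ ω ∂μ, ∀ j ∈ s, μ[c j • F j|m] ω = c j * μ[F j|m] ω :=
    (eventually_all_finset s).2 fun j _ => (condExp_smul (c j) (F j) m).mono fun ω h => h
  filter_upwards [hmono, condExp_finsetSum hcF m, hsmul] with ω h hsum hsmul
  rw [hsum, Finset.sum_apply] at h
  exact h.trans_eq (sum_congr rfl hsmul)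

lemma condExp_le_const_of_condExp_le [IsFiniteMeasure μ] {m' : MeasurableSpace Ω}
    (hm : m ≤ m') (hm' : m' ≤ m₀) {f : Ω → ℝ} {c : ℝ} (h : μ[f|m'] ≤ᵐ[μ] fun _ => c) :
    μ[f|m] ≤ᵐ[μ] fun _ => c :=
  calc μ[f|m] =ᵐ[μ] μ[μ[f|m']|m] := (condExp_condExp_of_le hm hm').symm
    _ ≤ᵐ[μ] μ[(fun _ => c : Ω → ℝ)|m] := condExp_mono integrable_condExp (integrable_const c) h
    _ = fun _ => c := condExp_const (hm.trans hm') c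

lemma MeasureTheory.MemLp.integrable_norm_sq {E : Type*} [NormedAddCommGroup E] {f : Ω → E}
    (hf : MemLp f 2 μ) : Integrable (fun ω => ‖f ω‖ ^ 2) μ :=
  (memLp_two_iff_integrable_sq_norm hf.1).1 hf

lemma integrable_norm_sq_comp_of_lipschitzWith {E E' : Type*} [NormedAddCommGroup E]
    [NormedAddCommGroup E'] {F : E → E'} {L : ℝ≥0} (hF : LipschitzWith L F) {x y : Ω → E}
    (hFx : AEStronglyMeasurable (fun ω => ‖F (x ω)‖ ^ 2) μ)
    (hFy : Integrable (fun ω => ‖F (y ω)‖ ^ 2) μ)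
    (hyx : Integrable (fun ω => ‖y ω - x ω‖ ^ 2) μ) :
    Integrable (fun ω => ‖F (x ω)‖ ^ 2) μ := by
  refine ((hFy.const_mul 2).add (hyx.const_mul (2 * L ^ 2))).mono' hFx
    (ae_of_all _ fun ω => ?_)
  have h : ‖F (x ω)‖ ≤ ‖F (y ω)‖ + L * ‖y ω - x ω‖ :=
    (norm_le_norm_add_norm_sub' _ (F (y ω))).trans (by
      gcongr; rw [norm_sub_rev]; exact hF.norm_sub_le _ _)
  simp only [Real.norm_eq_abs, abs_pow, abs_norm, Pi.add_apply]
  nlinarith [sq_nonneg (‖F (y ω)‖ - L * ‖y ω - x ω‖), norm_nonneg (F (x ω))]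

lemma condExp_norm_iterate_sub_sq_le {E : Type*} [NormedAddCommGroup E] [NormedSpace ℝ E]
    {K : ℕ} {η : ℝ} {x : Ω → E} {y q : ℕ → Ω → E}
    (h0 : ∀ ω, y 0 ω = x ω) (hstep : ∀ k ω, k < K → y (k + 1) ω = y k ω - η • q k ω)
    (hq : ∀ j, Integrable (fun ω => ‖q j ω‖ ^ 2) μ)
    (hyx : ∀ k, Integrable (fun ω => ‖y k ω - x ω‖ ^ 2) μ) :
    ∀ᵐ ω ∂μ, ∀ k, k ≤ K → μ[fun ω => ‖y k ω - x ω‖ ^ 2|m] ω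
      ≤ η ^ 2 * k * ∑ j ∈ range k, μ[fun ω => ‖q j ω‖ ^ 2|m] ω := by
  refine ae_all_iff.2 fun k => eventually_imp_distrib_left.2 fun hk => ?_
  have hpath : ∀ ω, ‖y k ω - x ω‖ ^ 2 ≤ ∑ j ∈ range k, η ^ 2 * k * ‖q j ω‖ ^ 2 := fun ω => by
    rw [← mul_sum]
    exact norm_iterate_sub_sq_le (y := fun k => y k ω) (h0 ω)
      (fun k hk => hstep k ω hk) k hk
  filter_upwards [condExp_le_sum_mul_condExp (m := m) _ (hyx k) (fun j _ => hq j) hpath]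
    with ω h
  rwa [← mul_sum] at h

variable {E : Type*} [NormedAddCommGroup E] [NormedSpace ℝ E] [CompleteSpace E]

lemma condExp_norm_sq_biased_oracle_le [IsFiniteMeasure μ] {𝒢 ℋ : MeasurableSpace Ω}
    (hm𝒢 : m ≤ 𝒢) (h𝒢ℋ : 𝒢 ≤ ℋ) (hℋ : ℋ ≤ m₀) {F b : E → E} {L : ℝ≥0} {U σ σq : ℝ}
    (hF : LipschitzWith L F) (hb : ∀ z, ‖b z‖ ≤ U) {x y g q : Ω → E}
    (hx : StronglyMeasurable[m] x) (hg : StronglyMeasurable[ℋ] g) (hq : MemLp q 2 μ)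
    (hyx : Integrable (fun ω => ‖y ω - x ω‖ ^ 2) μ)
    (hg_mean : μ[g|𝒢] =ᵐ[μ] fun ω => F (y ω))
    (hg_var : μ[fun ω => ‖g ω - F (y ω)‖ ^ 2|𝒢] ≤ᵐ[μ] fun _ => σ ^ 2)
    (hq_mean : μ[q|ℋ] =ᵐ[μ] fun ω => g ω + b (y ω))
    (hq_var : μ[fun ω => ‖q ω - (g ω + b (y ω))‖ ^ 2|ℋ] ≤ᵐ[μ] fun _ => σq ^ 2) :
    μ[fun ω => ‖q ω‖ ^ 2|m] ≤ᵐ[μ] fun ω =>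
      5 * (σq ^ 2 + σ ^ 2 + U ^ 2) + 5 * ‖F (x ω)‖ ^ 2
        + 5 * L ^ 2 * μ[fun ω => ‖y ω - x ω‖ ^ 2|m] ω := by
  have hgb : MemLp (fun ω => g ω + b (y ω)) 2 μ := (hq.condExp one_le_two).ae_eq hq_mean
  have hby : MemLp (fun ω => b (y ω)) 2 μ := by
    refine MemLp.of_bound ?_ U (Eventually.of_forall fun ω => hb (y ω))
    exact (hgb.aestronglyMeasurable.sub (hg.mono hℋ).aestronglyMeasurable).congr
      (ae_of_all _ fun ω => by simp)
  have hg2 : MemLp g 2 μ := (hgb.sub hby).ae_eq (ae_of_all _ fun ω => by simp)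
  have hFy : MemLp (fun ω => F (y ω)) 2 μ := (hg2.condExp one_le_two).ae_eq hg_mean
  have hFx_sm : StronglyMeasurable[m] fun ω => ‖F (x ω)‖ ^ 2 :=
    (hF.continuous.norm.pow 2).comp_stronglyMeasurable hx
  have hFx : Integrable (fun ω => ‖F (x ω)‖ ^ 2) μ :=
    integrable_norm_sq_comp_of_lipschitzWith hF
      (hFx_sm.mono (hm𝒢.trans h𝒢ℋ |>.trans hℋ)).aestronglyMeasurable
      hFy.integrable_norm_sq hyx
  have hbound := condExp_le_sum_mul_condExp (m := m) (s := univ) ![5, 5, 5 * L ^ 2, 5]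
    (F := ![fun ω => ‖q ω - (g ω + b (y ω))‖ ^ 2, fun ω => ‖g ω - F (y ω)‖ ^ 2,
      fun ω => ‖y ω - x ω‖ ^ 2, fun ω => U ^ 2 + ‖F (x ω)‖ ^ 2])
    hq.integrable_norm_sq
    (by
      simp only [mem_univ, forall_const, Fin.forall_fin_succ]
      exact ⟨(hq.sub hgb).integrable_norm_sq, (hg2.sub hFy).integrable_norm_sq, hyx,
        (integrable_const _).add hFx, nofun⟩)
    (fun ω => by
      simpa [Fin.sum_univ_four] using norm_sq_le_of_biased_oracle hF hb (q ω) (g ω) (y ω) (x ω))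
  have hP : μ[fun ω => U ^ 2 + ‖F (x ω)‖ ^ 2|m] = fun ω => U ^ 2 + ‖F (x ω)‖ ^ 2 :=
    condExp_of_stronglyMeasurable (hm𝒢.trans h𝒢ℋ |>.trans hℋ)
      (stronglyMeasurable_const.add hFx_sm) ((integrable_const _).add hFx)
  filter_upwards [hbound, condExp_le_const_of_condExp_le (hm𝒢.trans h𝒢ℋ) hℋ hq_var,
    condExp_le_const_of_condExp_le hm𝒢 (h𝒢ℋ.trans hℋ) hg_var] with ω h hA hC
  simp only [Fin.sum_univ_four, Matrix.cons_val_zero, Matrix.cons_val_one, Matrix.cons_val,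
    hP] at h
  nlinarith

end CondExp

/-- **FedAvg local-drift bound.**
There are absolute constants `c₀, C > 0` such that, for one round of quantum FedAvg under
β-smoothness, bounded gradient dissimilarity `(G, B)`, unbiased classical stochastic gradients
(variance `σ²`) and the biased quantum oracle (bias `U_q`, variance `σ_q²`), if
`η_ℓ ≤ c₀/((1+B²) β K η_g)` and `η_g ≥ 1`, then the average local-drift energy satisfies
`E_r ≤ C η_ℓ² K² (B²‖∇f(x^{r−1})‖² + G² + U_q² + σ² + σ_q²)` almost surely
(conditionally on the past `ℱ_{r−1}`). -/
theorem stmt_4 :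
    ∃ c₀ : ℝ, 0 < c₀ ∧ ∃ C : ℝ, 0 < C ∧
    ∀ {d N K : ℕ}, 0 < N → 0 < K →
    ∀ {Ω : Type} [mΩ : MeasurableSpace Ω] (μ : Measure Ω) [IsProbabilityMeasure μ]
      (ℱ0 : MeasurableSpace Ω) (𝒢 ℋ : ℕ → MeasurableSpace Ω),
      ℱ0 ≤ 𝒢 0 → (∀ k, 𝒢 k ≤ ℋ k) → (∀ k, ℋ k ≤ 𝒢 (k + 1)) → (∀ k, ℋ k ≤ mΩ) →
    ∀ (f : Fin N → EuclideanSpace ℝ (Fin d) → ℝ) (β : ℝ), 0 < β →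
      -- β-smoothness (A1)
      (∀ i x y', ‖gradient (f i) x - gradient (f i) y'‖ ≤ β * ‖x - y'‖) →
    ∀ (G B : ℝ), 0 ≤ G → 1 ≤ B →
      -- bounded gradient dissimilarity (A2)
      (∀ x, (1 / (N : ℝ)) * ∑ i, ‖gradient (f i) x‖ ^ 2
          ≤ G ^ 2 + B ^ 2 * ‖gradient (globalObj f) x‖ ^ 2) →
    ∀ (xprev : Ω → EuclideanSpace ℝ (Fin d)), StronglyMeasurable[ℱ0] xprev →
    ∀ (y g gtil : Fin N → ℕ → Ω → EuclideanSpace ℝ (Fin d)),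
      (∀ i k, StronglyMeasurable[𝒢 k] (y i k)) →
      (∀ i k, StronglyMeasurable[ℋ k] (g i k)) →
      (∀ i k, Integrable (gtil i k) μ) →
      (∀ i k, Integrable (fun ω => ‖gtil i k ω‖ ^ 2) μ) →
      (∀ i k, Integrable (fun ω => ‖y i k ω - xprev ω‖ ^ 2) μ) →
    ∀ (σ : ℝ), 0 ≤ σ →
      -- unbiased classical stochastic gradient with variance at most σ² (A3)
      (∀ i k, μ[g i k | 𝒢 k] =ᵐ[μ] fun ω => gradient (f i) (y i k ω)) →
      (∀ i k, μ[(fun ω => ‖g i k ω - gradient (f i) (y i k ω)‖ ^ 2) | 𝒢 k]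
          ≤ᵐ[μ] fun _ => σ ^ 2) →
    ∀ (b : Fin N → EuclideanSpace ℝ (Fin d) → EuclideanSpace ℝ (Fin d)) (Uq σq : ℝ),
      0 ≤ Uq → 0 ≤ σq →
      -- biased quantum gradient oracle (A4)
      (∀ i x, ‖b i x‖ ≤ Uq) →
      (∀ i k, μ[gtil i k | ℋ k] =ᵐ[μ] fun ω => g i k ω + b i (y i k ω)) →
      (∀ i k, μ[(fun ω => ‖gtil i k ω - (g i k ω + b i (y i k ω))‖ ^ 2) | ℋ k]
          ≤ᵐ[μ] fun _ => σq ^ 2) →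
    ∀ (ηl ηg : ℝ), 0 < ηl → 0 < ηg →
      -- step sizes: `η_ℓ ≤ c₀/((1+B²) β K η_g)` and `η_g ≥ 1`
      ηl ≤ c₀ / ((1 + B ^ 2) * β * K * ηg) → 1 ≤ ηg →
      -- local updates
      (∀ i ω, y i 0 ω = xprev ω) →
      (∀ i k ω, k < K → y i (k + 1) ω = y i k ω - ηl • gtil i k ω) →
    -- conclusion: conditional average local-drift energy bound
    ∀ᵐ ω ∂μ,
      (1 / ((K : ℝ) * N)) * ∑ i, ∑ k ∈ Finset.range K,
          (μ[(fun ω' => ‖y i k ω' - xprev ω'‖ ^ 2) | ℱ0]) ω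
        ≤ C * ηl ^ 2 * K ^ 2 *
          (B ^ 2 * ‖gradient (globalObj f) (xprev ω)‖ ^ 2
            + G ^ 2 + Uq ^ 2 + σ ^ 2 + σq ^ 2) := by
  refine ⟨1 / 2, by norm_num, 10, by norm_num, ?_⟩
  intro d N K hN hK Ω mΩ μ _ ℱ0 𝒢 ℋ hℱ0 h𝒢ℋ hℋ𝒢 hℋ f β hβ hsmooth G B _ hB hdiss xprev hxprev
    y g gtil _ hg hgtil_int hgtil_sq hyx σ _ hmean hvar b Uq σq _ _ hb hqmean hqvar ηl ηg hηl hηg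
    hstep hηg1 hy0 hupd
  have hℱ0𝒢 : ∀ k, ℱ0 ≤ 𝒢 k := by
    intro k
    induction k with
    | zero => exact hℱ0
    | succ k ih => exact ih.trans ((h𝒢ℋ k).trans (hℋ𝒢 k))
  have hLip : ∀ i, LipschitzWith ⟨β, hβ.le⟩ (gradient (f i)) := fun i =>
    lipschitzWith_iff_norm_sub_le.2 (hsmooth i)
  have hT : ∀ᵐ ω ∂μ, ∀ i k, μ[fun ω => ‖gtil i k ω‖ ^ 2|ℱ0] ω ≤
      5 * (σq ^ 2 + σ ^ 2 + Uq ^ 2) + 5 * ‖gradient (f i) (xprev ω)‖ ^ 2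
        + 5 * β ^ 2 * μ[fun ω => ‖y i k ω - xprev ω‖ ^ 2|ℱ0] ω :=
    ae_all_iff.2 fun i => ae_all_iff.2 fun k =>
      condExp_norm_sq_biased_oracle_le (hℱ0𝒢 k) (h𝒢ℋ k) (hℋ k) (hLip i) (hb i) hxprev (hg i k)
        ((memLp_two_iff_integrable_sq_norm (hgtil_int i k).1).2 (hgtil_sq i k)) (hyx i k)
        (hmean i k) (hvar i k) (hqmean i k) (hqvar i k)
  have hS := ae_all_iff.2 fun i =>
    condExp_norm_iterate_sub_sq_le (m := ℱ0) (hy0 i) (hupd i) (hgtil_sq i) (hyx i)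
  have hηβK : ηl ^ 2 * (5 * β ^ 2) * K ^ 2 ≤ 1 / 2 := by
    rw [le_div_iff₀ (by positivity)] at hstep
    have h2 : 2 ≤ (1 + B ^ 2) * ηg := by nlinarith
    have h4 : ηl * β * K ≤ 1 / 4 := by
      nlinarith [mul_le_mul_of_nonneg_left h2 (by positivity : 0 ≤ ηl * β * K)]
    nlinarith [mul_self_le_mul_self (by positivity : 0 ≤ ηl * β * K) h4]
  filter_upwards [hT, hS] with ω hT hS
  have hclient : ∀ i, ∀ k < K, μ[fun ω => ‖y i k ω - xprev ω‖ ^ 2|ℱ0] ω ≤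
      2 * ηl ^ 2 * K ^ 2 *
        (5 * (σq ^ 2 + σ ^ 2 + Uq ^ 2) + 5 * ‖gradient (f i) (xprev ω)‖ ^ 2) :=
    fun i k hk => le_of_drift_recursion (by positivity) (by positivity) hηβK (hS i)
      (fun k _ => hT i k) k hk.le
  have hdiss_ω : (1 / (N : ℝ)) * ∑ i, 5 * ‖gradient (f i) (xprev ω)‖ ^ 2 ≤
      5 * (G ^ 2 + B ^ 2 * ‖gradient (globalObj f) (xprev ω)‖ ^ 2) := by
    rw [← mul_sum, mul_left_comm]
    gcongr
    exact hdiss (xprev ω)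
  exact (double_avg_le_of_le hN hK (by positivity) hclient hdiss_ω).trans_eq (by ring)
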